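/- arXiv:1308.3896 — 3 statements merged into one kernel-verified Lean document; each statement's English description precedes it below -/
import Mathlib

section
/- (Amalgamation Lemma, zero-sum free case.) Let G = ⊕_{i=1}^r ⊕_{j=1}^{k_i} C_{p_i^{α_{i,j}}} with distinct primes p_1, …, p_r and α_{i,1} ≥ α_{i,2} ≥ ··· ≥ α_{i,k_i} ≥ 1 for each i (setting α_{i,j} = 0 for j > k_i). Suppose α_{i,1} > α_{i,2} for some i ∈ [1, r], and let ℓ be a positive integer divisible by p_i^{α_{i,2}+1}. If S is a dense zero-sum free indexed sequence over G, then S contains at most p_i − 1 elements of order ℓ, i.e. |{(g,n) ∈ S : ord(g) = ℓ}| ≤ p_i − 1. -/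
open Finset

def IsIndexedSeq {G : Type*} [AddCommGroup G] (S : Finset (G × ℕ)) : Prop :=
  ∀ x ∈ S, x.1 ≠ 0

def seqSum {G : Type*} [AddCommGroup G] (S : Finset (G × ℕ)) : G :=
  ∑ x ∈ S, x.1

noncomputable def crossNum {G : Type*} [AddCommGroup G] (S : Finset (G × ℕ)) : ℝ :=
  ∑ x ∈ S, (1 : ℝ) / (addOrderOf x.1 : ℝ)

def ZeroSumFree {G : Type*} [AddCommGroup G] (S : Finset (G × ℕ)) : Prop :=
  ∀ T ⊆ S, T.Nonempty → seqSum T ≠ 0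

def IsIrreducibleSeq {G : Type*} [AddCommGroup G] (S : Finset (G × ℕ)) : Prop :=
  S.Nonempty ∧ seqSum S = 0 ∧ ∀ T ⊆ S, T.Nonempty → T ≠ S → seqSum T ≠ 0

def IsFactorization {G : Type*} [AddCommGroup G] (S : Finset (G × ℕ))
    (F : Finset (Finset (G × ℕ))) : Prop :=
  (∀ A ∈ F, IsIrreducibleSeq A) ∧
    (∀ A ∈ F, ∀ B ∈ F, A ≠ B → Disjoint A B) ∧
    (∀ x, x ∈ S ↔ ∃ A ∈ F, x ∈ A)

def IsUFIS {G : Type*} [AddCommGroup G] (S : Finset (G × ℕ)) : Prop :=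
  IsIndexedSeq S ∧ seqSum S = 0 ∧ ∃! F, IsFactorization S F

noncomputable def littleK (G : Type*) [AddCommGroup G] : ℝ :=
  sSup {x : ℝ | ∃ S : Finset (G × ℕ), IsIndexedSeq S ∧ ZeroSumFree S ∧ crossNum S = x}

noncomputable def bigK (G : Type*) [AddCommGroup G] : ℝ :=
  sSup {x : ℝ | ∃ S : Finset (G × ℕ), IsIndexedSeq S ∧ IsIrreducibleSeq S ∧ crossNum S = x}

noncomputable def K1 (G : Type*) [AddCommGroup G] : ℝ :=
  sSup {x : ℝ | ∃ S : Finset (G × ℕ), IsUFIS S ∧ crossNum S = x}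

def DenseZSF {G : Type*} [AddCommGroup G] (S : Finset (G × ℕ)) : Prop :=
  IsIndexedSeq S ∧ ZeroSumFree S ∧ crossNum S = littleK G ∧
    ∀ T : Finset (G × ℕ), IsIndexedSeq T → ZeroSumFree T → crossNum T = littleK G →
      S.card ≤ T.card

def DenseUFIS {G : Type*} [AddCommGroup G] (S : Finset (G × ℕ)) : Prop :=
  IsUFIS S ∧ crossNum S = K1 G ∧
    ∀ T : Finset (G × ℕ), IsUFIS T → crossNum T = K1 G → S.card ≤ T.card

def WidePrime (p n : ℕ) : Prop :=
  ¬ p ∣ n ∧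
    (p : ℝ) / ((p : ℝ) - 1) ≥
      ∏ q ∈ n.primeFactors,
        ((q : ℝ) ^ (n.factorization q + 1) - 1) /
          ((q : ℝ) ^ (n.factorization q + 1) - (q : ℝ) ^ (n.factorization q))

def Wide2Prime (p n : ℕ) : Prop :=
  ¬ p ∣ n ∧
    ((p : ℝ) ^ 2 + 2 * (p : ℝ) - 2) / (p : ℝ) ^ 2 ≥
      ∏ q ∈ n.primeFactors,
        ((q : ℝ) ^ (n.factorization q + 1) - 1) /
          ((q : ℝ) ^ (n.factorization q + 1) - (q : ℝ) ^ (n.factorization q))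

def IsWideNat (n : ℕ) : Prop :=
  0 < n ∧ ∀ q ∈ n.primeFactors,
    WidePrime q (∏ q' ∈ n.primeFactors.filter (fun q' => q < q'), q' ^ n.factorization q')

def Is2WideNat (n : ℕ) : Prop :=
  0 < n ∧ ∀ q ∈ n.primeFactors,
    Wide2Prime q (∏ q' ∈ n.primeFactors.filter (fun q' => q < q'), q' ^ n.factorization q')

/-! Suppose `S` contains `p` elements `x₁, …, x_p` of order `ℓ = p d`, where `p = p_{i₀}`. Since
`p^{α₂} ∣ d`, the multiples `d xₘ` vanish on every coordinate except the top factor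
`C_{p^{α₁}}` and are killed by `p`, so they lie in a subgroup with at most `p` elements. By
pigeonhole on prefix sums some block `T` of the `xₘ` has `d σ(T) = 0`; it has at least two terms
because `ℓ ∤ d`. Then `k(T) = |T|/ℓ ≤ 1/d ≤ 1/ord σ(T)`, so replacing `T` by the single term
`σ(T)` yields a zero-sum free sequence of no smaller cross number and smaller length, contradicting
density. -/

theorem AddSubgroup.exists_subset_sum_eq_zero {ι G : Type*} [AddCommGroup G] (H : AddSubgroup G)
    [Finite H] (s : Finset ι) (f : ι → G) (hf : ∀ i ∈ s, f i ∈ H) (hs : Nat.card H ≤ #s) :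
    ∃ t ⊆ s, t.Nonempty ∧ ∑ i ∈ t, f i = 0 := by
  classical
  -- the prefixes of an enumeration of `s` form a chain `u 0 ⊆ u 1 ⊆ ⋯ ⊆ u #s` with `#(u m) = m`
  set u : ℕ → Finset ι := fun m => (s.toList.take m).toFinset
  have hu_mono : ∀ {a b}, a ≤ b → u a ⊆ u b := fun hab _ hx =>
    List.mem_toFinset.2 ((List.take_prefix_take_left hab).subset (List.mem_toFinset.1 hx))
  have hu_sub : ∀ m, u m ⊆ s := fun m _ hx =>
    Finset.mem_toList.1 (List.mem_of_mem_take (List.mem_toFinset.1 hx))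
  have hu_card : ∀ m ≤ #s, #(u m) = m := fun m hm => by
    rw [List.toFinset_card_of_nodup ((Finset.nodup_toList s).sublist (List.take_sublist _ _)),
      List.length_take, Finset.length_toList, min_eq_left hm]
  let z : Fin (#s + 1) → H := fun m =>
    ⟨∑ i ∈ u m, f i, AddSubgroup.sum_mem H fun i hi => hf i (hu_sub m hi)⟩
  have hz : ¬ Function.Injective z := fun hinj => by
    have := Nat.card_le_card_of_injective z hinj
    simp only [Nat.card_eq_fintype_card, Fintype.card_fin] at this
    omega
  have key : ∀ a b : Fin (#s + 1), a < b → z a = z b → ∃ t ⊆ s, t.Nonempty ∧ ∑ i ∈ t, f i = 0 := by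
    intro a b hab heq
    have hsub : u a ⊆ u b := hu_mono hab.le
    refine ⟨u b \ u a, Finset.sdiff_subset.trans (hu_sub b), ?_, ?_⟩
    · rw [← Finset.card_pos, Finset.card_sdiff_of_subset hsub, hu_card a (by omega),
        hu_card b (by omega)]
      omega
    · rw [Finset.sum_sdiff_eq_sub hsub, sub_eq_zero]
      exact congrArg Subtype.val heq.symm
  simp only [Function.Injective, not_forall] at hz
  obtain ⟨a, b, heq, hne⟩ := hz
  rcases lt_or_gt_of_ne hne with hab | hab
  · exact key a b hab heq
  · exact key b a hab heq.symm

section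

variable {G : Type*} [AddCommGroup G]

theorem ZeroSumFree.card_lt [Finite G] {S : Finset (G × ℕ)} (hS : ZeroSumFree S) :
    #S < Nat.card G := by
  by_contra! h
  obtain ⟨t, hts, hne, hsum⟩ := (⊤ : AddSubgroup G).exists_subset_sum_eq_zero S Prod.fst
    (fun _ _ => AddSubgroup.mem_top _) (by rwa [AddSubgroup.card_top])
  exact hS t hts hne hsum

theorem crossNum_le_card (S : Finset (G × ℕ)) : crossNum S ≤ #S := by
  rw [← nsmul_one, ← Finset.sum_const]
  exact Finset.sum_le_sum fun x _ => by rw [one_div]; exact Nat.cast_inv_le_one _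

theorem crossNum_le_littleK [Finite G] {S : Finset (G × ℕ)} (hI : IsIndexedSeq S)
    (hZ : ZeroSumFree S) : crossNum S ≤ littleK G := by
  refine le_csSup ⟨Nat.card G, ?_⟩ ⟨S, hI, hZ, rfl⟩
  rintro _ ⟨T, -, hT, rfl⟩
  exact (crossNum_le_card T).trans (by exact_mod_cast hT.card_lt.le)

theorem crossNum_eq_card_div {T : Finset (G × ℕ)} {n : ℕ} (hT : ∀ x ∈ T, addOrderOf x.1 = n) :
    crossNum T = #T / n := by
  rw [crossNum, Finset.sum_congr rfl fun x hx => by rw [hT x hx], Finset.sum_const, nsmul_eq_mul,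
    mul_one_div]

theorem ZeroSumFree.insert_seqSum_sdiff [DecidableEq G] {S T : Finset (G × ℕ)}
    (hS : ZeroSumFree S) (hT : T ⊆ S) (hTne : T.Nonempty) (n : ℕ) :
    ZeroSumFree (insert (seqSum T, n) (S \ T)) := by
  intro U hU hUne hU0
  by_cases ha : (seqSum T, n) ∈ U
  · have hU' : U.erase (seqSum T, n) ⊆ S \ T := fun x hx =>
      (Finset.mem_insert.1 (hU (Finset.mem_of_mem_erase hx))).resolve_left
        (Finset.ne_of_mem_erase hx)
    have hdisj : Disjoint (U.erase (seqSum T, n)) T :=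
      Finset.disjoint_left.2 fun x hx => (Finset.mem_sdiff.1 (hU' hx)).2
    refine hS _ (Finset.union_subset (hU'.trans Finset.sdiff_subset) hT)
      (hTne.mono Finset.subset_union_right) ?_
    change ∑ x ∈ U.erase (seqSum T, n) ∪ T, x.1 = 0
    rw [Finset.sum_union hdisj]
    exact (Finset.sum_erase_add U Prod.fst ha).trans hU0
  · exact hS U (fun x hx => Finset.sdiff_subset ((Finset.mem_insert.1 (hU hx)).resolve_left
      (fun h => ha (by rwa [h] at hx)))) hUne hU0

theorem DenseZSF.one_div_addOrderOf_seqSum_lt [Finite G] {S T : Finset (G × ℕ)} (hS : DenseZSF S)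
    (hT : T ⊆ S) (hT2 : 2 ≤ #T) : 1 / (addOrderOf (seqSum T) : ℝ) < crossNum T := by
  classical
  obtain ⟨hI, hZ, hK, hmin⟩ := hS
  by_contra! hle
  obtain ⟨n, hn⟩ := Infinite.exists_notMem_finset (S.image Prod.snd)
  have hfresh : (seqSum T, n) ∉ S \ T := fun h =>
    hn (Finset.mem_image_of_mem Prod.snd (Finset.sdiff_subset h))
  have hTne : T.Nonempty := Finset.card_pos.1 (by omega)
  set S' := insert (seqSum T, n) (S \ T)
  have hI' : IsIndexedSeq S' := by
    intro x hx
    rcases Finset.mem_insert.1 hx with rfl | hx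
    · exact hZ T hT hTne
    · exact hI x (Finset.sdiff_subset hx)
  have hZ' : ZeroSumFree S' := hZ.insert_seqSum_sdiff hT hTne n
  have hcross : crossNum S ≤ crossNum S' := by
    have hsplit : crossNum (S \ T) + crossNum T = crossNum S := Finset.sum_sdiff hT
    have hS' : crossNum S' = 1 / (addOrderOf (seqSum T) : ℝ) + crossNum (S \ T) :=
      Finset.sum_insert hfresh
    linarith
  have hcard := hmin S' hI' hZ' (le_antisymm (crossNum_le_littleK hI' hZ') (hK ▸ hcross))
  rw [Finset.card_insert_of_notMem hfresh, Finset.card_sdiff_of_subset hT] at hcard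
  have := Finset.card_le_card hT
  omega

theorem DenseZSF.card_filter_addOrderOf_lt [Finite G] {S : Finset (G × ℕ)} (hS : DenseZSF S)
    (H : AddSubgroup G) {q d : ℕ} (hq : 1 < q) (hH : Nat.card H ≤ q)
    (hmem : ∀ x ∈ S, addOrderOf x.1 = q * d → d • x.1 ∈ H) :
    #{x ∈ S | addOrderOf x.1 = q * d} < Nat.card H := by
  classical
  by_contra! h
  obtain ⟨T₀, hT₀, hT₀card⟩ := Finset.exists_subset_card_eq h
  have hT₀S : T₀ ⊆ S := hT₀.trans (Finset.filter_subset _ _)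
  have hord₀ : ∀ x ∈ T₀, addOrderOf x.1 = q * d := fun x hx => (Finset.mem_filter.1 (hT₀ hx)).2
  obtain ⟨T, hTT₀, ⟨x, hx⟩, hsum⟩ := H.exists_subset_sum_eq_zero T₀ (fun x => d • x.1)
    (fun x hx => hmem x (hT₀S hx) (hord₀ x hx)) hT₀card.ge
  have hord : ∀ x ∈ T, addOrderOf x.1 = q * d := fun x hx => hord₀ x (hTT₀ hx)
  have hσ : addOrderOf (seqSum T) ∣ d :=
    addOrderOf_dvd_of_nsmul_eq_zero (by rw [seqSum, Finset.smul_sum]; exact hsum)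
  have hd : 0 < d := Nat.pos_of_mul_pos_left (hord x hx ▸ addOrderOf_pos x.1)
  have hT2 : 2 ≤ #T := by
    by_contra! h1
    have hT1 : #T = 1 := by have := Finset.card_pos.2 ⟨x, hx⟩; omega
    obtain ⟨y, rfl⟩ := Finset.card_eq_one.1 hT1
    have hyd : q * d ∣ d := by simpa [seqSum, hord y (mem_singleton_self y)] using hσ
    have := Nat.le_of_dvd hd hyd
    nlinarith
  have hlt := hS.one_div_addOrderOf_seqSum_lt (hTT₀.trans hT₀S) hT2
  rw [crossNum_eq_card_div hord] at hlt
  have hTq : (#T : ℝ) ≤ q := by exact_mod_cast (card_le_card hTT₀).trans (hT₀card ▸ hH)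
  have hσd : (addOrderOf (seqSum T) : ℝ) ≤ d := by exact_mod_cast Nat.le_of_dvd hd hσ
  have hσpos : (0 : ℝ) < addOrderOf (seqSum T) := by exact_mod_cast addOrderOf_pos _
  rw [div_lt_div_iff₀ hσpos (by positivity)] at hlt
  push_cast at hlt
  nlinarith

end

theorem nsmul_eq_zero_of_mul_nsmul_eq_zero {A : Type*} [AddMonoid A] {x : A} {n m d : ℕ}
    (hn : n • x = 0) (hmd : (m * d) • x = 0) (h : n.Coprime m ∨ n ∣ d) : d • x = 0 := by
  rw [← addOrderOf_dvd_iff_nsmul_eq_zero] at hn hmd ⊢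
  rcases h with hcop | hnd
  · exact (hcop.coprime_dvd_left hn).dvd_of_dvd_mul_left hmd
  · exact hn.trans hnd

section PrimePowerProd

variable {r : ℕ} (p k : Fin r → ℕ) (α : Fin r → ℕ → ℕ)

abbrev PrimePowerProd : Type := (i : Fin r) → (j : Fin (k i)) → ZMod (p i ^ α i j.val)

def headSocle (i₀ : Fin r) : AddSubgroup (PrimePowerProd p k α) where
  carrier := {y | p i₀ • y = 0 ∧ ∀ i (j : Fin (k i)), (i ≠ i₀ ∨ j.val ≠ 0) → y i j = 0}
  zero_mem' := ⟨smul_zero _, fun _ _ _ => rfl⟩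
  add_mem' := fun {y y'} hy hy' => ⟨by rw [smul_add, hy.1, hy'.1, add_zero],
    fun i j hij => by simp only [Pi.add_apply, hy.2 i j hij, hy'.2 i j hij, add_zero]⟩
  neg_mem' := fun {y} hy => ⟨by rw [smul_neg, hy.1, neg_zero],
    fun i j hij => by simp only [Pi.neg_apply, hy.2 i j hij, neg_zero]⟩

variable {p k α}

theorem card_headSocle_le {i₀ : Fin r} (hp : 0 < p i₀) (hk : 0 < k i₀) :
    Nat.card (headSocle p k α i₀) ≤ p i₀ := by
  classical
  have : NeZero (p i₀ ^ α i₀ 0) := ⟨pow_ne_zero _ hp.ne'⟩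
  let f : headSocle p k α i₀ → {x : ZMod (p i₀ ^ α i₀ 0) // p i₀ • x = 0} := fun y =>
    ⟨y.1 i₀ ⟨0, hk⟩, by simpa using congrFun (congrFun y.2.1 i₀) ⟨0, hk⟩⟩
  have hf : Function.Injective f := by
    intro y y' h
    refine Subtype.ext (funext fun i => funext fun j => ?_)
    by_cases hij : i = i₀ ∧ j.val = 0
    · obtain ⟨rfl, hj⟩ := hij
      obtain rfl : j = ⟨0, hk⟩ := Fin.ext hj
      exact congrArg Subtype.val h
    · rw [not_and_or] at hij
      rw [y.2.2 i j hij, y'.2.2 i j hij]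
  calc Nat.card (headSocle p k α i₀)
      ≤ Nat.card {x : ZMod (p i₀ ^ α i₀ 0) // p i₀ • x = 0} := Nat.card_le_card_of_injective f hf
    _ = #{x : ZMod (p i₀ ^ α i₀ 0) | p i₀ • x = 0} := by
      rw [Nat.card_eq_fintype_card, Fintype.card_subtype]
    _ ≤ p i₀ := IsAddCyclic.card_nsmul_eq_zero_le hp

theorem nsmul_mem_headSocle {i₀ : Fin r} (hcop : ∀ i ≠ i₀, (p i).Coprime (p i₀))
    (hmono : ∀ j j' : ℕ, j ≤ j' → j' < k i₀ → α i₀ j' ≤ α i₀ j) {d : ℕ}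
    (hd : p i₀ ^ α i₀ 1 ∣ d) {g : PrimePowerProd p k α} (hg : (p i₀ * d) • g = 0) :
    d • g ∈ headSocle p k α i₀ := by
  refine ⟨by rw [smul_smul]; exact hg, fun i j hij => ?_⟩
  refine nsmul_eq_zero_of_mul_nsmul_eq_zero (n := p i ^ α i j) (m := p i₀) ?_
    (congrFun (congrFun hg i) j) ?_
  · rw [nsmul_eq_mul, ZMod.natCast_self, zero_mul]
  · by_cases hi : i = i₀
    · subst hi
      have hj : 1 ≤ j.val := Nat.one_le_iff_ne_zero.2 (hij.resolve_left (not_not.2 rfl))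
      exact Or.inr ((pow_dvd_pow _ (hmono 1 j hj j.isLt)).trans hd)
    · exact Or.inl ((hcop i hi).pow_left _)

end PrimePowerProd

theorem stmt5_general (r : ℕ) (p k : Fin r → ℕ) (α : Fin r → ℕ → ℕ)
    (hp : ∀ i, (p i).Prime) (hinj : Function.Injective p)
    (hk : ∀ i, 1 ≤ k i)
    (hmono : ∀ i, ∀ j j' : ℕ, j ≤ j' → j' < k i → α i j' ≤ α i j)
    (i₀ : Fin r)
    (l : ℕ) (hdvd : p i₀ ^ (α i₀ 1 + 1) ∣ l)
    (S : Finset (((i : Fin r) → (j : Fin (k i)) → ZMod (p i ^ α i j.val)) × ℕ))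
    (hS : DenseZSF S) :
    (S.filter (fun x => addOrderOf x.1 = l)).card ≤ p i₀ - 1 := by
  have : ∀ i (j : Fin (k i)), NeZero (p i ^ α i j.val) := fun i _ => ⟨pow_ne_zero _ (hp i).ne_zero⟩
  obtain ⟨d, rfl⟩ : p i₀ ∣ l := (dvd_pow_self _ (Nat.succ_ne_zero _)).trans hdvd
  have hd : p i₀ ^ α i₀ 1 ∣ d := by
    rwa [pow_succ', Nat.mul_dvd_mul_iff_left (hp i₀).pos] at hdvd
  have hcop : ∀ i ≠ i₀, (p i).Coprime (p i₀) := fun i hi =>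
    (Nat.coprime_primes (hp i) (hp i₀)).2 (hinj.ne hi)
  have hH := card_headSocle_le (α := α) (hp i₀).pos (hk i₀)
  have hlt := hS.card_filter_addOrderOf_lt (headSocle p k α i₀) (hp i₀).one_lt hH fun x _ hx =>
    nsmul_mem_headSocle hcop (hmono i₀) hd (hx ▸ addOrderOf_nsmul_eq_zero x.1)
  exact Nat.le_sub_one_of_lt (hlt.trans_le hH)

theorem stmt5 (r : ℕ) (p k : Fin r → ℕ) (α : Fin r → ℕ → ℕ)
    (hp : ∀ i, (p i).Prime) (hinj : Function.Injective p)
    (hk : ∀ i, 1 ≤ k i)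
    (hα1 : ∀ i j, j < k i → 1 ≤ α i j)
    (hmono : ∀ i, ∀ j j' : ℕ, j ≤ j' → j' < k i → α i j' ≤ α i j)
    (hzero : ∀ i j, k i ≤ j → α i j = 0)
    (i₀ : Fin r) (hgt : α i₀ 1 < α i₀ 0)
    (l : ℕ) (hl : 0 < l) (hdvd : p i₀ ^ (α i₀ 1 + 1) ∣ l)
    (S : Finset (((i : Fin r) → (j : Fin (k i)) → ZMod (p i ^ α i j.val)) × ℕ))
    (hS : DenseZSF S) :
    (S.filter (fun x => addOrderOf x.1 = l)).card ≤ p i₀ - 1 :=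
  stmt5_general r p k α hp hinj hk hmono i₀ l hdvd S hS
end

section
/- Let G be a finite abelian group and let S be an indexed sequence over G. Then S is a subset of some UFIS over G if and only if for every two zero-sum subsets U and V of S, the intersection U ∩ V is also zero-sum (the empty set counting as zero-sum). -/
open Finset

/-!
A zero-sum subset `U` of a UFIS `T` is a union of blocks of the factorization of `T`: factoring
`U` and `T \ U` separately gives a factorization of `T`, which must be the unique one. Hence the
intersection of two zero-sum subsets is again a union of blocks, so it is zero-sum.

Conversely, if intersections of zero-sum subsets of `S` are zero-sum, two irreducible subsets
of `S` that meet coincide, so a zero-sum such `S` has only one factorization. If `σ(S) ≠ 0`,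
adjoin one new element `w` of value `-σ(S)`: the zero-sum subsets of `S ∪ {w}` containing `w`
are the complements of zero-sum subsets of `S`, so the intersection property survives.
-/

section

variable {G : Type*} [AddCommGroup G]

def ZeroSumsInterClosed [DecidableEq G] (S : Finset (G × ℕ)) : Prop :=
  ∀ U ⊆ S, ∀ V ⊆ S, seqSum U = 0 → seqSum V = 0 → seqSum (U ∩ V) = 0

theorem seqSum_sdiff_of_subset [DecidableEq G] {U S : Finset (G × ℕ)} (h : U ⊆ S) :
    seqSum (S \ U) = seqSum S - seqSum U :=
  sum_sdiff_eq_sub h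

theorem seqSum_union_add_seqSum_inter [DecidableEq G] (U V : Finset (G × ℕ)) :
    seqSum (U ∪ V) + seqSum (U ∩ V) = seqSum U + seqSum V :=
  sum_union_inter

theorem IsFactorization.subset {S : Finset (G × ℕ)} {F : Finset (Finset (G × ℕ))}
    (hF : IsFactorization S F) {A : Finset (G × ℕ)} (hA : A ∈ F) : A ⊆ S :=
  fun x hx => (hF.2.2 x).2 ⟨A, hA, hx⟩

theorem isFactorization_singleton {A : Finset (G × ℕ)} (hA : IsIrreducibleSeq A) :
    IsFactorization A {A} :=
  ⟨by simpa using hA, by simp, fun x => by simp⟩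

theorem IsFactorization.union [DecidableEq G] {U V : Finset (G × ℕ)}
    {FU FV : Finset (Finset (G × ℕ))} (hU : IsFactorization U FU) (hV : IsFactorization V FV)
    (hUV : Disjoint U V) : IsFactorization (U ∪ V) (FU ∪ FV) := by
  refine ⟨fun A hA => (mem_union.1 hA).elim (hU.1 A) (hV.1 A), ?_, fun x => ?_⟩
  · intro A hA B hB hAB
    rcases mem_union.1 hA with hA | hA <;> rcases mem_union.1 hB with hB | hB
    · exact hU.2.1 A hA B hB hAB
    · exact hUV.mono (hU.subset hA) (hV.subset hB)
    · exact (hUV.mono (hU.subset hB) (hV.subset hA)).symm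
    · exact hV.2.1 A hA B hB hAB
  · simp only [mem_union, hU.2.2 x, hV.2.2 x, or_and_right, exists_or]

theorem exists_irreducible_subset (S : Finset (G × ℕ)) (hne : S.Nonempty) (h0 : seqSum S = 0) :
    ∃ A ⊆ S, IsIrreducibleSeq A := by
  induction S using Finset.strongInduction with
  | _ S ih =>
    by_cases hirr : IsIrreducibleSeq S
    · exact ⟨S, Subset.rfl, hirr⟩
    obtain ⟨T, hTS, hTne, hTS', hT0⟩ : ∃ T ⊆ S, T.Nonempty ∧ T ≠ S ∧ seqSum T = 0 := by
      simpa [IsIrreducibleSeq, hne, h0] using hirr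
    obtain ⟨A, hAT, hA⟩ := ih T (ssubset_of_subset_of_ne hTS hTS') hTne hT0
    exact ⟨A, hAT.trans hTS, hA⟩

theorem exists_factorization [DecidableEq G] (S : Finset (G × ℕ)) (h0 : seqSum S = 0) :
    ∃ F, IsFactorization S F := by
  induction S using Finset.strongInduction with
  | _ S ih =>
    rcases S.eq_empty_or_nonempty with rfl | hne
    · exact ⟨∅, by simp [IsFactorization]⟩
    obtain ⟨A, hAS, hA⟩ := exists_irreducible_subset S hne h0
    obtain ⟨F, hF⟩ := ih (S \ A) (sdiff_ssubset hAS hA.1)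
      (by rw [seqSum_sdiff_of_subset hAS, h0, hA.2.1, sub_zero])
    refine ⟨{A} ∪ F, ?_⟩
    simpa [union_sdiff_of_subset hAS] using (isFactorization_singleton hA).union hF disjoint_sdiff

theorem subset_or_disjoint_of_unique_factorization [DecidableEq G] {T : Finset (G × ℕ)}
    {F : Finset (Finset (G × ℕ))} (hT0 : seqSum T = 0)
    (huniq : ∀ F', IsFactorization T F' → F' = F) {U : Finset (G × ℕ)} (hUT : U ⊆ T)
    (hU0 : seqSum U = 0) {A : Finset (G × ℕ)} (hA : A ∈ F) : A ⊆ U ∨ Disjoint A U := by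
  obtain ⟨FU, hFU⟩ := exists_factorization U hU0
  obtain ⟨FC, hFC⟩ := exists_factorization (T \ U)
    (by rw [seqSum_sdiff_of_subset hUT, hT0, hU0, sub_zero])
  have hsplit := hFU.union hFC disjoint_sdiff
  rw [union_sdiff_of_subset hUT] at hsplit
  rw [← huniq _ hsplit, mem_union] at hA
  exact hA.imp hFU.subset fun hA => sdiff_disjoint.mono_left (hFC.subset hA)

theorem IsFactorization.seqSum_eq_zero_of_forall_subset_or_disjoint [DecidableEq G]
    {T : Finset (G × ℕ)} {F : Finset (Finset (G × ℕ))} (hF : IsFactorization T F)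
    {W : Finset (G × ℕ)} (hWT : W ⊆ T) (hW : ∀ A ∈ F, A ⊆ W ∨ Disjoint A W) :
    seqSum W = 0 := by
  have hW_eq : W = (F.filter (· ⊆ W)).biUnion id := by
    ext x
    simp only [mem_biUnion, mem_filter, id]
    constructor
    · intro hx
      obtain ⟨A, hA, hxA⟩ := (hF.2.2 x).1 (hWT hx)
      exact ⟨A, ⟨hA, (hW A hA).resolve_right fun h => disjoint_left.1 h hxA hx⟩, hxA⟩
    · rintro ⟨A, ⟨-, hAW⟩, hxA⟩
      exact hAW hxA
  rw [hW_eq, seqSum, sum_biUnion]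
  · exact sum_eq_zero fun A hA => (hF.1 A (mem_filter.1 hA).1).2.1
  · intro A hA B hB hAB
    exact hF.2.1 A (mem_filter.1 hA).1 B (mem_filter.1 hB).1 hAB

theorem IsUFIS.zeroSumsInterClosed [DecidableEq G] {T : Finset (G × ℕ)} (hT : IsUFIS T) :
    ZeroSumsInterClosed T := by
  obtain ⟨-, hT0, F, hF, huniq⟩ := hT
  intro U hUT V hVT hU0 hV0
  refine hF.seqSum_eq_zero_of_forall_subset_or_disjoint (inter_subset_left.trans hUT)
    fun A hA => ?_
  rcases subset_or_disjoint_of_unique_factorization hT0 huniq hUT hU0 hA with hAU | hAU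
  · rcases subset_or_disjoint_of_unique_factorization hT0 huniq hVT hV0 hA with hAV | hAV
    · exact Or.inl (subset_inter hAU hAV)
    · exact Or.inr (hAV.mono_right inter_subset_right)
  · exact Or.inr (hAU.mono_right inter_subset_left)

namespace ZeroSumsInterClosed

variable [DecidableEq G] {S : Finset (G × ℕ)}

theorem eq_of_inter_nonempty (hS : ZeroSumsInterClosed S) {A B : Finset (G × ℕ)} (hAS : A ⊆ S)
    (hBS : B ⊆ S) (hA : IsIrreducibleSeq A) (hB : IsIrreducibleSeq B) (hAB : (A ∩ B).Nonempty) :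
    A = B := by
  have h0 := hS A hAS B hBS hA.2.1 hB.2.1
  have hA' : A ∩ B = A := not_not.1 fun h => hA.2.2 _ inter_subset_left hAB h h0
  have hB' : A ∩ B = B := not_not.1 fun h => hB.2.2 _ inter_subset_right hAB h h0
  rw [← hA', hB']

theorem factorization_subset (hS : ZeroSumsInterClosed S) {F₁ F₂ : Finset (Finset (G × ℕ))}
    (h₁ : IsFactorization S F₁) (h₂ : IsFactorization S F₂) : F₁ ⊆ F₂ := by
  intro A hA
  obtain ⟨x, hx⟩ := (h₁.1 A hA).1
  obtain ⟨B, hB, hxB⟩ := (h₂.2.2 x).1 (h₁.subset hA hx)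
  rwa [hS.eq_of_inter_nonempty (h₁.subset hA) (h₂.subset hB) (h₁.1 A hA) (h₂.1 B hB)
    ⟨x, mem_inter.2 ⟨hx, hxB⟩⟩]

theorem isUFIS (hS : ZeroSumsInterClosed S) (hind : IsIndexedSeq S) (h0 : seqSum S = 0) :
    IsUFIS S := by
  obtain ⟨F, hF⟩ := exists_factorization S h0
  exact ⟨hind, h0, F, hF, fun F' hF' =>
    (hS.factorization_subset hF' hF).antisymm (hS.factorization_subset hF hF')⟩

theorem seqSum_sdiff_eq_zero (hS : ZeroSumsInterClosed S) {U V : Finset (G × ℕ)} (hU : U ⊆ S)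
    (hV : V ⊆ S) (hU0 : seqSum U = 0) (hV0 : seqSum V = 0) : seqSum (U \ V) = 0 := by
  rw [← sdiff_inter_self_left, seqSum_sdiff_of_subset inter_subset_left, hU0,
    hS U hU V hV hU0 hV0, sub_zero]

theorem seqSum_union_eq_zero (hS : ZeroSumsInterClosed S) {U V : Finset (G × ℕ)} (hU : U ⊆ S)
    (hV : V ⊆ S) (hU0 : seqSum U = 0) (hV0 : seqSum V = 0) : seqSum (U ∪ V) = 0 := by
  have h := seqSum_union_add_seqSum_inter U V
  rwa [hU0, hV0, hS U hU V hV hU0 hV0, add_zero, add_zero] at h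

theorem insert (hS : ZeroSumsInterClosed S) {w : G × ℕ} (h0 : seqSum (insert w S) = 0) :
    ZeroSumsInterClosed (insert w S) := by
  set T := Insert.insert w S
  have hcompl : ∀ U ⊆ T, seqSum U = 0 → w ∈ U → T \ U ⊆ S ∧ seqSum (T \ U) = 0 :=
    fun U hUT hU0 hwU => ⟨by simp [T, insert_sdiff_of_mem _ hwU],
      by rw [seqSum_sdiff_of_subset hUT, h0, hU0, sub_zero]⟩
  have hsub : ∀ U ⊆ T, w ∉ U → U ⊆ S := fun U hUT hwU => (subset_insert_iff_of_notMem hwU).1 hUT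
  intro U hUT V hVT hU0 hV0
  by_cases hwU : w ∈ U <;> by_cases hwV : w ∈ V
  · obtain ⟨hXS, hX0⟩ := hcompl U hUT hU0 hwU
    obtain ⟨hYS, hY0⟩ := hcompl V hVT hV0 hwV
    have hUV : U ∩ V = T \ ((T \ U) ∪ (T \ V)) := by
      ext x; have := @hUT x; simp only [mem_inter, mem_sdiff, mem_union]; tauto
    rw [hUV, seqSum_sdiff_of_subset (union_subset sdiff_subset sdiff_subset), h0,
      hS.seqSum_union_eq_zero hXS hYS hX0 hY0, sub_zero]
  · obtain ⟨hXS, hX0⟩ := hcompl U hUT hU0 hwU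
    have hUV : U ∩ V = V \ (T \ U) := by
      ext x; have := @hVT x; simp only [mem_inter, mem_sdiff]; tauto
    rw [hUV]
    exact hS.seqSum_sdiff_eq_zero (hsub V hVT hwV) hXS hV0 hX0
  · obtain ⟨hYS, hY0⟩ := hcompl V hVT hV0 hwV
    have hUV : U ∩ V = U \ (T \ V) := by
      ext x; have := @hUT x; simp only [mem_inter, mem_sdiff]; tauto
    rw [hUV]
    exact hS.seqSum_sdiff_eq_zero (hsub U hUT hwU) hYS hU0 hY0
  · exact hS U (hsub U hUT hwU) V (hsub V hVT hwV) hU0 hV0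

theorem exists_zeroSum_superset (hS : ZeroSumsInterClosed S) (hind : IsIndexedSeq S) :
    ∃ T, S ⊆ T ∧ IsIndexedSeq T ∧ seqSum T = 0 ∧ ZeroSumsInterClosed T := by
  by_cases h0 : seqSum S = 0
  · exact ⟨S, Subset.rfl, hind, h0, hS⟩
  obtain ⟨n, hn⟩ := Infinite.exists_notMem_finset (S.image Prod.snd)
  have hw : (-seqSum S, n) ∉ S := fun h => hn (mem_image_of_mem Prod.snd h)
  have hT0 : seqSum (Insert.insert (-seqSum S, n) S) = 0 := by
    rw [seqSum, sum_insert hw]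
    exact neg_add_cancel _
  refine ⟨_, subset_insert _ _, fun x hx => ?_, hT0, hS.insert hT0⟩
  rcases mem_insert.1 hx with rfl | hx
  · exact neg_ne_zero.2 h0
  · exact hind x hx

end ZeroSumsInterClosed

end

theorem stmt7_general (G : Type*) [AddCommGroup G] [DecidableEq G]
    (S : Finset (G × ℕ)) (hS : IsIndexedSeq S) :
    (∃ T : Finset (G × ℕ), S ⊆ T ∧ IsUFIS T) ↔
      ∀ U ⊆ S, ∀ V ⊆ S, seqSum U = 0 → seqSum V = 0 → seqSum (U ∩ V) = 0 := by
  constructor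
  · rintro ⟨T, hST, hT⟩ U hUS V hVS
    exact hT.zeroSumsInterClosed U (hUS.trans hST) V (hVS.trans hST)
  · intro hclosed
    obtain ⟨T, hST, hTind, hT0, hTclosed⟩ :=
      ZeroSumsInterClosed.exists_zeroSum_superset hclosed hS
    exact ⟨T, hST, hTclosed.isUFIS hTind hT0⟩

theorem stmt7 (G : Type*) [AddCommGroup G] [Fintype G] [DecidableEq G]
    (S : Finset (G × ℕ)) (hS : IsIndexedSeq S) :
    (∃ T : Finset (G × ℕ), S ⊆ T ∧ IsUFIS T) ↔
      ∀ U ⊆ S, ∀ V ⊆ S, seqSum U = 0 → seqSum V = 0 → seqSum (U ∩ V) = 0 :=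
  stmt7_general G S hS
end

section
/- (Amalgamation preserves unique factorization.) Let G be a finite abelian group, let S be a UFIS over G, and let T be a subset of S with σ(T) ≠ 0. Then for any m ∈ ℕ such that (σ(T), m) ∉ S∖T, the indexed sequence (S∖T) ∪ {(σ(T), m)} is a UFIS over G. -/
open Finset

/-!
Write `x = (σ(T), m)` and `S' = (S ∖ T) ∪ {x}`. Given a factorization of `S'`, let `A` be its
block containing `x`. Replacing `x` by `T` turns `A` into the zero-sum sequence `(A ∖ {x}) ∪ T`;
factoring it and keeping the other blocks gives a factorization of `S`, which must be the unique
one. A block of that factorization lying in `S ∖ T` cannot come from `(A ∖ {x}) ∪ T`, since it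
would be a proper zero-sum subsequence of the irreducible `A`. So the blocks avoiding `x` are
exactly the blocks of the factorization of `S` contained in `S ∖ T`, and `A` is what they leave
of `S'`: the factorization of `S'` is determined.
-/

section Factorization

variable {G : Type*} [AddCommGroup G]

lemma IsIrreducibleSeq.eq_of_subset {A B : Finset (G × ℕ)} (hA : IsIrreducibleSeq A)
    (hBA : B ⊆ A) (hB : B.Nonempty) (hB0 : seqSum B = 0) : B = A := by
  by_contra hne
  exact hA.2.2 B hBA hB hne hB0

namespace IsFactorization

variable {S : Finset (G × ℕ)} {F : Finset (Finset (G × ℕ))}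

lemma subset_s18 (hF : IsFactorization S F) {A : Finset (G × ℕ)} (hA : A ∈ F) : A ⊆ S :=
  fun x hx => (hF.2.2 x).2 ⟨A, hA, hx⟩

lemma eq_of_mem (hF : IsFactorization S F) {A B : Finset (G × ℕ)} (hA : A ∈ F) (hB : B ∈ F)
    {x : G × ℕ} (hxA : x ∈ A) (hxB : x ∈ B) : A = B := by
  by_contra h
  exact disjoint_left.mp (hF.2.1 A hA B hB h) hxA hxB

lemma exists_mem (hF : IsFactorization S F) {x : G × ℕ} (hx : x ∈ S) : ∃ A ∈ F, x ∈ A :=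
  (hF.2.2 x).1 hx

lemma singleton {A : Finset (G × ℕ)} (hA : IsIrreducibleSeq A) : IsFactorization A {A} :=
  ⟨by simpa using hA, by simp, by simp⟩

variable [DecidableEq G]

lemma union_s18 {S₁ S₂ : Finset (G × ℕ)} {F₁ F₂ : Finset (Finset (G × ℕ))}
    (h₁ : IsFactorization S₁ F₁) (h₂ : IsFactorization S₂ F₂) (hS : Disjoint S₁ S₂) :
    IsFactorization (S₁ ∪ S₂) (F₁ ∪ F₂) := by
  have cross : ∀ A ∈ F₁, ∀ B ∈ F₂, Disjoint A B := fun A hA B hB =>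
    hS.mono (h₁.subset_s18 hA) (h₂.subset_s18 hB)
  refine ⟨?_, ?_, fun x => ?_⟩
  · intro A hA
    rcases mem_union.mp hA with hA | hA
    exacts [h₁.1 A hA, h₂.1 A hA]
  · intro A hA B hB hAB
    rcases mem_union.mp hA with hA | hA <;> rcases mem_union.mp hB with hB | hB
    exacts [h₁.2.1 A hA B hB hAB, cross A hA B hB, (cross B hB A hA).symm, h₂.2.1 A hA B hB hAB]
  · simp only [mem_union, h₁.2.2 x, h₂.2.2 x, or_and_right, exists_or]

lemma erase (hF : IsFactorization S F) {A : Finset (G × ℕ)} (hA : A ∈ F) :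
    IsFactorization (S \ A) (F.erase A) := by
  refine ⟨fun B hB => hF.1 B (mem_of_mem_erase hB),
    fun B hB C hC => hF.2.1 B (mem_of_mem_erase hB) C (mem_of_mem_erase hC), fun x => ?_⟩
  constructor
  · intro hx
    obtain ⟨B, hB, hxB⟩ := hF.exists_mem (mem_sdiff.mp hx).1
    exact ⟨B, mem_erase.mpr ⟨fun h => (mem_sdiff.mp hx).2 (h ▸ hxB), hB⟩, hxB⟩
  · rintro ⟨B, hB, hxB⟩
    refine mem_sdiff.mpr ⟨hF.subset_s18 (mem_of_mem_erase hB) hxB, fun hxA => ?_⟩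
    exact ne_of_mem_erase hB (hF.eq_of_mem (mem_of_mem_erase hB) hA hxB hxA)

lemma eq_of_erase_eq {F' : Finset (Finset (G × ℕ))} (hF : IsFactorization S F)
    (hF' : IsFactorization S F') {A A' : Finset (G × ℕ)} (hA : A ∈ F) (hA' : A' ∈ F')
    (h : F.erase A = F'.erase A') : F = F' := by
  have hsdiff : S \ A = S \ A' := by
    ext x
    rw [(hF.erase hA).2.2 x, (hF'.erase hA').2.2 x, h]
  have hAA' : A = A' := by
    rw [← Finset.sdiff_sdiff_eq_self (hF.subset_s18 hA), ← Finset.sdiff_sdiff_eq_self (hF'.subset_s18 hA'),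
      hsdiff]
  rw [← insert_erase hA, ← insert_erase hA', h, hAA']

end IsFactorization

variable [DecidableEq G]

lemma seqSum_sdiff {S T : Finset (G × ℕ)} (h : T ⊆ S) :
    seqSum (S \ T) = seqSum S - seqSum T := by
  rw [seqSum, seqSum, seqSum, eq_sub_iff_add_eq, sum_sdiff h]

theorem exists_isFactorization (S : Finset (G × ℕ)) (hS : seqSum S = 0) :
    ∃ F, IsFactorization S F := by
  induction S using Finset.strongInduction with
  | _ S ih =>
    rcases S.eq_empty_or_nonempty with rfl | hne
    · exact ⟨∅, by simp [IsFactorization]⟩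
    have hS_mem : S ∈ S.powerset.filter (fun A => A.Nonempty ∧ seqSum A = 0) := by
      simp [hne, hS]
    obtain ⟨A, hA, hmin⟩ := exists_min_image _ card ⟨S, hS_mem⟩
    simp only [mem_filter, mem_powerset] at hA
    obtain ⟨hAS, hAne, hA0⟩ := hA
    have hA : IsIrreducibleSeq A := by
      refine ⟨hAne, hA0, fun B hBA hBne hBA' hB0 => ?_⟩
      have := hmin B (by simp [hBA.trans hAS, hBne, hB0])
      exact (card_lt_card (ssubset_of_subset_of_ne hBA hBA')).not_ge this
    have hlt : S \ A ⊂ S := sdiff_ssubset hAS hAne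
    obtain ⟨F, hF⟩ := ih _ hlt (by rw [seqSum_sdiff hAS, hS, hA0, sub_zero])
    refine ⟨{A} ∪ F, ?_⟩
    simpa [union_sdiff_of_subset hAS] using
      (IsFactorization.singleton hA).union_s18 hF disjoint_sdiff

end Factorization

section Amalgamation

variable {G : Type*} [AddCommGroup G] [DecidableEq G] {S T : Finset (G × ℕ)} {m : ℕ}

lemma exists_isFactorization_of_amalgamated (hTS : T ⊆ S) (hx : (seqSum T, m) ∉ S \ T)
    {F' : Finset (Finset (G × ℕ))} (hF' : IsFactorization (insert (seqSum T, m) (S \ T)) F')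
    {A : Finset (G × ℕ)} (hA : A ∈ F') (hxA : (seqSum T, m) ∈ A) :
    ∃ GA, IsFactorization (A.erase (seqSum T, m) ∪ T) GA ∧
      IsFactorization S (F'.erase A ∪ GA) := by
  set x := (seqSum T, m)
  have hAS' := hF'.subset_s18 hA
  have hAx : A.erase x ⊆ S \ T := fun y hy =>
    (mem_insert.mp (hAS' (mem_of_mem_erase hy))).resolve_left (ne_of_mem_erase hy)
  have hsum : seqSum (A.erase x ∪ T) = 0 := by
    have hA0 : seqSum A = 0 := (hF'.1 A hA).2.1
    have herase : seqSum (A.erase x) = seqSum A - seqSum T := sum_erase_eq_sub hxA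
    rw [seqSum, sum_union (disjoint_of_subset_left hAx sdiff_disjoint), ← seqSum, ← seqSum,
      herase, hA0, zero_sub, neg_add_cancel]
  obtain ⟨GA, hGA⟩ := exists_isFactorization _ hsum
  have hdisj : Disjoint (insert x (S \ T) \ A) (A.erase x ∪ T) := by
    rw [disjoint_left]
    grind
  have hcover : insert x (S \ T) \ A ∪ (A.erase x ∪ T) = S := by
    ext y
    have := @hAS' y
    grind
  exact ⟨GA, hGA, hcover ▸ (hF'.erase hA).union_s18 hGA hdisj⟩

lemma erase_eq_filter_of_amalgamated (hTS : T ⊆ S) (hx : (seqSum T, m) ∉ S \ T)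
    {F : Finset (Finset (G × ℕ))} (huniq : ∀ F₀, IsFactorization S F₀ → F₀ = F)
    {F' : Finset (Finset (G × ℕ))} (hF' : IsFactorization (insert (seqSum T, m) (S \ T)) F')
    {A : Finset (G × ℕ)} (hA : A ∈ F') (hxA : (seqSum T, m) ∈ A) :
    F'.erase A = F.filter (· ⊆ S \ T) := by
  obtain ⟨GA, hGA, hS⟩ := exists_isFactorization_of_amalgamated hTS hx hF' hA hxA
  ext B
  rw [mem_filter, ← huniq _ hS, mem_union]
  constructor
  · intro hB
    refine ⟨Or.inl hB, fun y hy => ?_⟩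
    have hy' := (hF'.erase hA).subset_s18 hB hy
    grind
  · rintro ⟨hB | hB, hBST⟩
    · exact hB
    have hBA : B ⊆ A := fun y hy => (mem_union.mp (hGA.subset_s18 hB hy)).elim mem_of_mem_erase
      fun hyT => absurd hyT (mem_sdiff.mp (hBST hy)).2
    have hBA' := (hF'.1 A hA).eq_of_subset hBA (hGA.1 B hB).1 (hGA.1 B hB).2.1
    exact absurd (hBST (hBA' ▸ hxA)) hx

end Amalgamation

theorem stmt18_general (G : Type*) [AddCommGroup G] [DecidableEq G]
    (S : Finset (G × ℕ)) (hS : IsUFIS S)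
    (T : Finset (G × ℕ)) (hTS : T ⊆ S) (hT : seqSum T ≠ 0) :
    ∀ m : ℕ, (seqSum T, m) ∉ S \ T →
      IsUFIS (insert (seqSum T, m) (S \ T)) := by
  intro m hx
  obtain ⟨hS_ind, hS0, F, -, huniq⟩ := hS
  have hsum : seqSum (insert (seqSum T, m) (S \ T)) = 0 := by
    rw [seqSum, sum_insert hx, ← seqSum, seqSum_sdiff hTS, hS0, zero_sub, add_neg_cancel]
  refine ⟨?_, hsum, ?_⟩
  · intro y hy
    rcases mem_insert.mp hy with rfl | hy
    exacts [hT, hS_ind y (mem_sdiff.mp hy).1]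
  obtain ⟨F₁, hF₁⟩ := exists_isFactorization _ hsum
  refine ⟨F₁, hF₁, fun F₂ hF₂ => ?_⟩
  obtain ⟨A₁, hA₁, hx₁⟩ := hF₁.exists_mem (mem_insert_self _ _)
  obtain ⟨A₂, hA₂, hx₂⟩ := hF₂.exists_mem (mem_insert_self _ _)
  refine hF₂.eq_of_erase_eq hF₁ hA₂ hA₁ ?_
  rw [erase_eq_filter_of_amalgamated hTS hx huniq hF₂ hA₂ hx₂,
    erase_eq_filter_of_amalgamated hTS hx huniq hF₁ hA₁ hx₁]

theorem stmt18 (G : Type*) [AddCommGroup G] [Fintype G] [DecidableEq G]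
    (S : Finset (G × ℕ)) (hS : IsUFIS S)
    (T : Finset (G × ℕ)) (hTS : T ⊆ S) (hT : seqSum T ≠ 0) :
    ∀ m : ℕ, (seqSum T, m) ∉ S \ T →
      IsUFIS (insert (seqSum T, m) (S \ T)) :=
  stmt18_general G S hS T hTS hT
end
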